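/- The Hankel determinants of the sequence (E_1, E_2, E_3, E_4, ...) are H_n = (n!/2^{n(n−1)/2}) · Π_{k=2}^{n−1} (k!)². -/

import Mathlib

open Finset

/-- The Euler numbers `E n`, defined as the Taylor coefficients (times `n!`)
of `tan x + sec x` at `0`, i.e. `E n = (d/dx)^n (tan x + sec x) |_{x=0}`. -/
noncomputable def eulerE (n : ℕ) : ℝ :=
  iteratedDeriv n (fun x : ℝ => Real.tan x + (Real.cos x)⁻¹) 0

/-- The word `σ_1 ⋯ σ_n` extended by the boundary convention `σ_0 = σ_{n+1} = +∞`,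
encoded with values in `{0, …, n-1}` and `n` playing the role of `+∞`. -/
def extWord (n : ℕ) (σ : Equiv.Perm (Fin n)) (j : ℕ) : ℕ :=
  if h : 1 ≤ j ∧ j - 1 < n then (σ ⟨j - 1, h.2⟩ : ℕ) else n

/-- number of peaks of `σ` (positions `j ∈ {1,…,n}` with `σ_{j-1} < σ_j > σ_{j+1}`). -/
def pk (n : ℕ) (σ : Equiv.Perm (Fin n)) : ℕ :=
  ((Finset.Icc 1 n).filter (fun j =>
    extWord n σ (j-1) < extWord n σ j ∧ extWord n σ (j+1) < extWord n σ j)).card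

/-- number of valleys of `σ` (positions `j ∈ {1,…,n}` with `σ_{j-1} > σ_j < σ_{j+1}`). -/
def valy (n : ℕ) (σ : Equiv.Perm (Fin n)) : ℕ :=
  ((Finset.Icc 1 n).filter (fun j =>
    extWord n σ j < extWord n σ (j-1) ∧ extWord n σ j < extWord n σ (j+1))).card

/-- number of double ascents of `σ` (positions `j ∈ {1,…,n}` with `σ_{j-1} < σ_j < σ_{j+1}`). -/
def da (n : ℕ) (σ : Equiv.Perm (Fin n)) : ℕ :=
  ((Finset.Icc 1 n).filter (fun j =>
    extWord n σ (j-1) < extWord n σ j ∧ extWord n σ j < extWord n σ (j+1))).card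

/-- number of peaks among positions `j ∈ {2,…,n}`. -/
def pk2 (n : ℕ) (σ : Equiv.Perm (Fin n)) : ℕ :=
  ((Finset.Icc 2 n).filter (fun j =>
    extWord n σ (j-1) < extWord n σ j ∧ extWord n σ (j+1) < extWord n σ j)).card

/-- number of double ascents among positions `j ∈ {2,…,n}`. -/
def da2 (n : ℕ) (σ : Equiv.Perm (Fin n)) : ℕ :=
  ((Finset.Icc 2 n).filter (fun j =>
    extWord n σ (j-1) < extWord n σ j ∧ extWord n σ j < extWord n σ (j+1))).card

/-- number of ascents of `σ` among positions `1,…,n-1` (`σ_j < σ_{j+1}`). -/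
def asc (n : ℕ) (σ : Equiv.Perm (Fin n)) : ℕ :=
  ((Finset.Icc 1 (n-1)).filter (fun j => extWord n σ j < extWord n σ (j+1))).card

/-- number of descents of `σ` among positions `1,…,n-1` (`σ_j > σ_{j+1}`). -/
def des (n : ℕ) (σ : Equiv.Perm (Fin n)) : ℕ :=
  ((Finset.Icc 1 (n-1)).filter (fun j => extWord n σ (j+1) < extWord n σ j)).card

/-!
`f = tan + sec` satisfies `f' = (1 + f²) / 2`, so `f⁽ⁿ⁾ = Pₙ(f)` with `P₀ = X` and
`Pₙ₊₁ = Pₙ' · (1 + X²) / 2`; as `f(0) = 1`, `E_n = Pₙ(1)`. On the polynomials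
`e_k = ((k + 1)! / 2^(k + 1)) (1 + X²) (X - 1)^k`, which satisfy `e_k(1) = δ_{k0}`, the
operator `p ↦ p' · (1 + X²) / 2` is tridiagonal with `b_k = k + 1` and `λ_k = k (k + 1) / 2`,
and `P₁ = e₀`. Hence `E_{n+1}` is the total weight of the Motzkin paths of length `n` from
height `0` to `0`. For such path weights the Hankel matrix factors as
`L · diag(λ₁ ⋯ λ_k) · Lᵀ`, where `L` is the unitriangular table of the weights of paths from `0`
to height `k`, so the determinant is `∏_{k<n} λ₁ ⋯ λ_k = ∏_{k<n} k! (k + 1)! / 2^k`.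
-/

theorem Finset.sum_range_succ_ite_pred {M : Type*} [AddCommMonoid M] (f : ℕ → M) (N : ℕ)
    (hf : f N = 0) :
    ∑ k ∈ range (N + 1), (if k = 0 then 0 else f (k - 1)) = ∑ k ∈ range (N + 1), f k := by
  rw [sum_range_succ', sum_range_succ, hf]
  simp

section Motzkin

variable {R : Type*} [CommRing R] (b l : ℕ → R)

/-- The total weight of the Motzkin paths of length `n` from height `0` to height `k`, where a
level step at height `h` weighs `b h`, a down step from height `h` weighs `l h` and an up step
weighs `1`. -/
def motzkinTable : ℕ → ℕ → R
  | 0, 0 => 1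
  | 0, _ + 1 => 0
  | n + 1, 0 => b 0 * motzkinTable n 0 + l 1 * motzkinTable n 1
  | n + 1, k + 1 =>
    motzkinTable n k + b (k + 1) * motzkinTable n (k + 1) + l (k + 2) * motzkinTable n (k + 2)

def motzkinNorm (k : ℕ) : R := ∏ i ∈ range k, l (i + 1)

variable {b l}

theorem motzkinTable_eq_zero_of_lt {n k : ℕ} (h : n < k) : motzkinTable b l n k = 0 := by
  induction n generalizing k with
  | zero => obtain ⟨k, rfl⟩ := Nat.exists_eq_add_of_lt h; rfl
  | succ n ih =>
    obtain ⟨k, rfl⟩ := Nat.exists_eq_add_of_lt (Nat.zero_lt_of_lt h)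
    simp only [motzkinTable, zero_add, ih (by omega : n < k), ih (by omega : n < k + 1),
      ih (by omega : n < k + 2), mul_zero, add_zero]

@[simp]
theorem motzkinTable_self (n : ℕ) : motzkinTable b l n n = 1 := by
  induction n with
  | zero => rfl
  | succ n ih =>
    simp only [motzkinTable, ih, motzkinTable_eq_zero_of_lt (Nat.lt_succ_self n),
      motzkinTable_eq_zero_of_lt (by omega : n < n + 2), mul_zero, add_zero]

theorem motzkinTable_succ (n k : ℕ) :
    motzkinTable b l (n + 1) k = (if k = 0 then 0 else motzkinTable b l n (k - 1)) +
      b k * motzkinTable b l n k + l (k + 1) * motzkinTable b l n (k + 1) := by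
  cases k <;> simp [motzkinTable]

theorem motzkinNorm_succ (k : ℕ) : motzkinNorm l (k + 1) = motzkinNorm l k * l (k + 1) :=
  prod_range_succ _ _

theorem sum_motzkinNorm_mul_ite_pred (u v : ℕ → R) {N : ℕ} (h : u N * v (N + 1) = 0) :
    ∑ k ∈ range (N + 1), motzkinNorm l k * ((if k = 0 then 0 else u (k - 1)) * v k) =
      ∑ k ∈ range (N + 1), motzkinNorm l k * (u k * (l (k + 1) * v (k + 1))) := by
  have := sum_range_succ_ite_pred (fun k => motzkinNorm l (k + 1) * (u k * v (k + 1))) N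
    (by rw [h, mul_zero])
  convert this using 2 with k
  · cases k <;> simp
  · rw [motzkinNorm_succ]; ring

-- The tridiagonal operator is self-adjoint for the weights `motzkinNorm l`, because
-- `motzkinNorm l (k + 1) = motzkinNorm l k * l (k + 1)`.
theorem sum_motzkinNorm_mul_motzkinTable_succ_left (n : ℕ) {m N : ℕ} (hm : m + 1 < N) :
    ∑ k ∈ range N, motzkinNorm l k * motzkinTable b l (m + 1) k * motzkinTable b l n k =
      ∑ k ∈ range N, motzkinNorm l k * motzkinTable b l m k * motzkinTable b l (n + 1) k := by
  obtain ⟨N, rfl⟩ : ∃ N', N = N' + 1 := ⟨N - 1, by omega⟩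
  have expand (p q : ℕ) :
      ∑ k ∈ range (N + 1), motzkinNorm l k * motzkinTable b l (p + 1) k * motzkinTable b l q k =
        ∑ k ∈ range (N + 1), motzkinNorm l k *
            ((if k = 0 then 0 else motzkinTable b l p (k - 1)) * motzkinTable b l q k) +
          ∑ k ∈ range (N + 1),
            motzkinNorm l k * (b k * (motzkinTable b l p k * motzkinTable b l q k)) +
          ∑ k ∈ range (N + 1), motzkinNorm l k *
            (motzkinTable b l q k * (l (k + 1) * motzkinTable b l p (k + 1))) := by
    rw [← sum_add_distrib, ← sum_add_distrib]
    refine sum_congr rfl fun k _ => ?_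
    rw [motzkinTable_succ]
    ring
  have hsymm : ∑ k ∈ range (N + 1),
      motzkinNorm l k * motzkinTable b l m k * motzkinTable b l (n + 1) k =
        ∑ k ∈ range (N + 1),
          motzkinNorm l k * motzkinTable b l (n + 1) k * motzkinTable b l m k :=
    sum_congr rfl fun k _ => mul_right_comm _ _ _
  have hmN : motzkinTable b l m N = 0 := motzkinTable_eq_zero_of_lt (by omega)
  have hmN' : motzkinTable b l m (N + 1) = 0 := motzkinTable_eq_zero_of_lt (by omega)
  rw [hsymm, expand, expand, sum_motzkinNorm_mul_ite_pred _ _ (by simp [hmN]),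
    sum_motzkinNorm_mul_ite_pred _ _ (by simp [hmN'])]
  simp only [mul_comm (motzkinTable b l m _) (motzkinTable b l n _)]
  ring

theorem sum_motzkinNorm_mul_motzkinTable (n : ℕ) {m N : ℕ} (hm : m < N) :
    ∑ k ∈ range N, motzkinNorm l k * motzkinTable b l m k * motzkinTable b l n k =
      motzkinTable b l (m + n) 0 := by
  induction m generalizing n with
  | zero =>
    rw [sum_eq_single_of_mem 0 (mem_range.2 hm) fun k _ hk => ?_]
    · simp [motzkinNorm]
    · rw [motzkinTable_eq_zero_of_lt (Nat.pos_of_ne_zero hk), mul_zero, zero_mul]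
  | succ m ih =>
    rw [sum_motzkinNorm_mul_motzkinTable_succ_left n hm, ih (n + 1) (by omega),
      Nat.add_right_comm, add_assoc]

theorem det_hankel_motzkinTable (n : ℕ) :
    (Matrix.of fun i j : Fin n => motzkinTable b l (i + j) 0).det =
      ∏ k ∈ range n, motzkinNorm l k := by
  let L : Matrix (Fin n) (Fin n) R := Matrix.of fun i k => motzkinTable b l i k
  have hL : L.det = 1 := by
    rw [Matrix.det_of_isLowerTriangular L fun i k (h : i < k) =>
      motzkinTable_eq_zero_of_lt (by exact_mod_cast h)]
    simp [L]
  have hfactor : (Matrix.of fun i j : Fin n => motzkinTable b l (i + j) 0) =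
      L * Matrix.diagonal (fun k : Fin n => motzkinNorm l k) * L.transpose := by
    ext i j
    rw [Matrix.mul_apply]
    simp only [Matrix.of_apply, Matrix.mul_diagonal, Matrix.transpose_apply, L]
    rw [← sum_motzkinNorm_mul_motzkinTable j i.isLt, ← Fin.sum_univ_eq_sum_range
      (fun k => motzkinNorm l k * motzkinTable b l i k * motzkinTable b l j k)]
    exact sum_congr rfl fun k _ => by ring
  rw [hfactor, Matrix.det_mul, Matrix.det_mul, Matrix.det_transpose, hL, Matrix.det_diagonal,
    Fin.prod_univ_eq_prod_range (fun k => motzkinNorm l k)]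
  ring

end Motzkin

section Expansion

variable {R M : Type*} [CommRing R] [AddCommGroup M] [Module R M] {b l : ℕ → R}

theorem pow_apply_eq_sum_motzkinTable {D : Module.End R M} {e : ℕ → M}
    (h0 : D (e 0) = e 1 + b 0 • e 0)
    (hsucc : ∀ k, D (e (k + 1)) = e (k + 2) + b (k + 1) • e (k + 1) + l (k + 1) • e k)
    {n N : ℕ} (hn : n < N) :
    (D ^ n) (e 0) = ∑ k ∈ range N, motzkinTable b l n k • e k := by
  induction n with
  | zero =>
    rw [sum_eq_single_of_mem 0 (mem_range.2 hn) fun k _ hk => ?_]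
    · simp [motzkinTable]
    · rw [motzkinTable_eq_zero_of_lt (Nat.pos_of_ne_zero hk), zero_smul]
  | succ n ih =>
    obtain ⟨N, rfl⟩ : ∃ N', N = N' + 1 := ⟨N - 1, by omega⟩
    have hD (k : ℕ) :
        D (e k) = e (k + 1) + b k • e k + (if k = 0 then 0 else l k • e (k - 1)) := by
      cases k <;> simp [h0, hsucc]
    have hup := sum_range_succ_ite_pred (fun k => motzkinTable b l n k • e (k + 1)) N
      (by rw [motzkinTable_eq_zero_of_lt (by omega), zero_smul])
    have hdown := sum_range_succ_ite_pred
      (fun k => (l (k + 1) * motzkinTable b l n (k + 1)) • e k) N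
      (by rw [motzkinTable_eq_zero_of_lt (by omega), mul_zero, zero_smul])
    rw [pow_succ', Module.End.mul_apply, ih (by omega), map_sum]
    simp only [map_smul, hD, smul_add, sum_add_distrib, motzkinTable_succ, add_smul]
    rw [← hup, ← hdown]
    congr 1
    congr 1
    all_goals refine sum_congr rfl fun k _ => ?_
    · cases k <;> simp
    · rw [mul_smul, smul_comm]
    · cases k <;> simp [mul_smul, smul_comm (l _)]

end Expansion

namespace Polynomial

noncomputable def derivativeMul {R : Type*} [CommRing R] (g : R[X]) : Module.End R R[X] :=
  LinearMap.mulRight R g ∘ₗ derivative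

theorem derivativeMul_apply {R : Type*} [CommRing R] (g p : R[X]) :
    derivativeMul g p = derivative p * g := rfl

theorem iteratedDeriv_eq_eval_derivativeMul_pow {𝕜 : Type*} [NontriviallyNormedField 𝕜]
    {f : 𝕜 → 𝕜} {U : Set 𝕜} (hU : IsOpen U) {g : 𝕜[X]}
    (hf : ∀ x ∈ U, HasDerivAt f (g.eval (f x)) x) (n : ℕ) {x : 𝕜} (hx : x ∈ U) :
    iteratedDeriv n f x = ((derivativeMul g ^ n) X).eval (f x) := by
  induction n generalizing x with
  | zero => simp
  | succ n ih =>
    have hloc : iteratedDeriv n f =ᶠ[nhds x] fun y => ((derivativeMul g ^ n) X).eval (f y) :=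
      Filter.eventually_of_mem (hU.mem_nhds hx) fun y hy => ih hy
    have hderiv : HasDerivAt (fun y => ((derivativeMul g ^ n) X).eval (f y))
        ((derivative ((derivativeMul g ^ n) X)).eval (f x) * g.eval (f x)) x :=
      (((derivativeMul g ^ n) X).hasDerivAt (f x)).comp x (hf x hx)
    rw [iteratedDeriv_succ, hloc.deriv_eq, hderiv.deriv, pow_succ', Module.End.mul_apply,
      derivativeMul_apply, eval_mul]

end Polynomial

open Polynomial Real

theorem hasDerivAt_tan_add_inv_cos {x : ℝ} (hx : cos x ≠ 0) :
    HasDerivAt (fun x => tan x + (cos x)⁻¹) ((1 + (tan x + (cos x)⁻¹) ^ 2) / 2) x := by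
  refine ((hasDerivAt_tan hx).add ((hasDerivAt_cos x).inv hx)).congr_deriv ?_
  rw [tan_eq_sin_div_cos]
  field_simp
  nlinarith [sin_sq_add_cos_sq x]

noncomputable def tanSecBasis (k : ℕ) : ℝ[X] :=
  C (((k + 1).factorial : ℝ) / 2 ^ (k + 1)) * ((1 + X ^ 2) * (X - 1) ^ k)

theorem derivativeMul_X : derivativeMul (C (1 / 2) * (1 + X ^ 2)) X = tanSecBasis 0 := by
  simp [derivativeMul_apply, tanSecBasis]

theorem derivativeMul_tanSecBasis_zero :
    derivativeMul (C (1 / 2) * (1 + X ^ 2)) (tanSecBasis 0) =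
      tanSecBasis 1 + tanSecBasis 0 := by
  apply Polynomial.funext
  intro x
  simp only [one_div, tanSecBasis, Nat.factorial, Nat.succ_eq_add_one, zero_add, mul_one,
    Nat.cast_one, pow_one, pow_zero, derivativeMul_apply, derivative_mul, derivative_C, zero_mul,
    derivative_one, derivative_X_pow_succ, map_add, map_one, eval_mul, eval_C,
    eval_add, eval_one, eval_X, eval_pow, Nat.reduceAdd, Nat.cast_ofNat, eval_sub]
  ring

theorem derivativeMul_tanSecBasis_succ (k : ℕ) :
    derivativeMul (C (1 / 2) * (1 + X ^ 2)) (tanSecBasis (k + 1)) =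
      tanSecBasis (k + 2) + ((k : ℝ) + 2) • tanSecBasis (k + 1) +
        (((k : ℝ) + 1) * (k + 2) / 2) • tanSecBasis k := by
  apply Polynomial.funext
  intro x
  simp only [one_div, tanSecBasis, Nat.factorial_succ, Nat.cast_mul, Nat.cast_add, Nat.cast_one,
    derivativeMul_apply, derivative_mul, derivative_C, zero_mul, derivative_one,
    derivative_pow, Nat.cast_ofNat, Nat.add_one_sub_one, pow_one, derivative_X, mul_one, zero_add,
    map_add, map_natCast, map_one, add_tsub_cancel_right, derivative_sub, sub_zero, eval_mul,
    eval_C, eval_add, eval_X, eval_pow, eval_sub, eval_one, eval_natCast, eval_smul, smul_eq_mul]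
  ring

theorem eval_one_tanSecBasis (k : ℕ) : (tanSecBasis k).eval 1 = if k = 0 then 1 else 0 := by
  cases k <;> norm_num [tanSecBasis]

theorem eulerE_succ_eq_motzkinTable (n : ℕ) :
    eulerE (n + 1) = motzkinTable (fun k => (k : ℝ) + 1) (fun k => k * (k + 1) / 2) n 0 := by
  have hU : IsOpen {x : ℝ | cos x ≠ 0} := isOpen_ne_fun continuous_cos continuous_const
  have hf : ∀ x ∈ {x : ℝ | cos x ≠ 0}, HasDerivAt (fun x => tan x + (cos x)⁻¹)
      ((C (1 / 2 : ℝ) * (1 + X ^ 2)).eval (tan x + (cos x)⁻¹)) x := fun x hx => by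
    convert hasDerivAt_tan_add_inv_cos hx using 1
    simp only [one_div, eval_mul, eval_C, eval_add, eval_one, eval_pow, eval_X]
    ring
  rw [eulerE, iteratedDeriv_eq_eval_derivativeMul_pow hU hf (n + 1) (by simp), pow_succ,
    Module.End.mul_apply, derivativeMul_X,
    pow_apply_eq_sum_motzkinTable (b := fun k => (k : ℝ) + 1) (l := fun k => k * (k + 1) / 2)
      (by simpa using derivativeMul_tanSecBasis_zero)
      (fun k => by simpa [add_assoc, one_add_one_eq_two] using derivativeMul_tanSecBasis_succ k)
      (Nat.lt_succ_self n),
    eval_finsetSum]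
  simp [eval_one_tanSecBasis]

theorem motzkinNorm_eq_factorial_mul_factorial (k : ℕ) :
    motzkinNorm (fun k => (k : ℝ) * (k + 1) / 2) k = k.factorial * (k + 1).factorial / 2 ^ k := by
  induction k with
  | zero => simp [motzkinNorm]
  | succ k ih =>
    rw [motzkinNorm_succ, ih, Nat.factorial_succ (k + 1), Nat.factorial_succ k]
    push_cast
    ring

theorem prod_range_factorial_mul_factorial_succ (n : ℕ) :
    ∏ k ∈ range n, k.factorial * (k + 1).factorial =
      n.factorial * ∏ k ∈ range n, k.factorial ^ 2 := by
  induction n with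
  | zero => simp
  | succ n ih =>
    rw [prod_range_succ, ih, prod_range_succ, Nat.factorial_succ]
    ring

theorem prod_range_factorial_sq (n : ℕ) :
    ∏ k ∈ range n, k.factorial ^ 2 = ∏ k ∈ Icc 2 (n - 1), k.factorial ^ 2 := by
  refine (prod_subset (fun k hk => ?_) fun k hk hk' => ?_).symm
  · simp only [mem_Icc, mem_range] at hk ⊢; omega
  · simp only [mem_Icc, mem_range, not_and, not_le] at hk hk'
    rw [Nat.factorial_eq_one.2 (by omega), one_pow]

theorem prod_range_motzkinNorm_tanSec (n : ℕ) :
    ∏ k ∈ range n, motzkinNorm (fun k => (k : ℝ) * (k + 1) / 2) k =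
      (n.factorial / 2 ^ (n * (n - 1) / 2)) * ∏ k ∈ Icc 2 (n - 1), (k.factorial : ℝ) ^ 2 := by
  simp only [motzkinNorm_eq_factorial_mul_factorial, prod_div_distrib]
  rw [div_mul_eq_mul_div, prod_pow_eq_pow_sum, sum_range_id]
  congr 1
  exact_mod_cast (prod_range_factorial_mul_factorial_succ n).trans
    (congrArg _ (prod_range_factorial_sq n))

theorem hankel_euler_shifted (n : ℕ) :
    Matrix.det (fun i j : Fin n => eulerE ((i : ℕ) + (j : ℕ) + 1))
      = ((Nat.factorial n : ℝ) / 2^(n*(n-1)/2)) * ∏ k ∈ Finset.Icc 2 (n-1), (Nat.factorial (k) : ℝ)^2 := by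
  simp only [eulerE_succ_eq_motzkinTable]
  exact (det_hankel_motzkinTable n).trans (prod_range_motzkinNorm_tanSec n)
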